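/- Let a₁, …, aₙ ∈ ℝⁿ be linearly independent vectors. Then every column r of the inverse of the matrix [N(a₁), …, N(aₙ)] (the matrix whose columns are the normalized vectors N(a₁), …, N(aₙ)) satisfies ‖r‖ ≤ √n / δ(a₁, …, aₙ), where ‖·‖ is the Euclidean norm. -/

import Mathlib

open scoped RealInnerProductSpace BigOperators
open MeasureTheory ProbabilityTheory Matrix

noncomputable section

/-- Identity map from plain vectors to Euclidean space (L2 norm). -/
def toE {n : ℕ} (x : Fin n → ℝ) : EuclideanSpace ℝ (Fin n) := WithLp.toLp 2 x

/-- Identity map from Euclidean space to plain vectors. -/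
def ofE {n : ℕ} (x : EuclideanSpace ℝ (Fin n)) : Fin n → ℝ := x

/-- Normalization N(x) = x / ‖x‖. -/
def nrm {n : ℕ} (x : EuclideanSpace ℝ (Fin n)) : EuclideanSpace ℝ (Fin n) := ‖x‖⁻¹ • x

/-- δ̂(S, v): the norm of the projection of v onto the orthogonal complement of span S,
divided by ‖v‖ (the sine of the angle between v and span S). -/
def deltaHat {n : ℕ} (S : Set (EuclideanSpace ℝ (Fin n))) (v : EuclideanSpace ℝ (Fin n)) : ℝ :=
  ‖(Submodule.orthogonalProjectionOnto ((Submodule.span ℝ S)ᗮ) v : EuclideanSpace ℝ (Fin n))‖ / ‖v‖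

/-- δ(z₁, …, zₙ) = min over k of δ̂({z_i : i ≠ k}, z_k). -/
def deltaVec {n : ℕ} (z : Fin n → EuclideanSpace ℝ (Fin n)) : ℝ :=
  ⨅ k : Fin n, deltaHat (z '' {i | i ≠ k}) (z k)

/-- δ(A) for rows a₁, …, a_m: the minimum of δ over all choices of n linearly
independent rows. -/
def deltaRows {m n : ℕ} (a : Fin m → EuclideanSpace ℝ (Fin n)) : ℝ :=
  sInf { d | ∃ f : Fin n → Fin m, LinearIndependent ℝ (a ∘ f) ∧ d = deltaVec (a ∘ f) }

/-- A vertex of the polyhedron {x : ∀ i, ⟪a i, x⟫ ≤ b i}. -/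
def IsVertex {m n : ℕ} (a : Fin m → EuclideanSpace ℝ (Fin n)) (b : Fin m → ℝ)
    (z : EuclideanSpace ℝ (Fin n)) : Prop :=
  (∀ i, ⟪a i, z⟫ ≤ b i) ∧ Submodule.span ℝ (a '' {i | ⟪a i, z⟫ = b i}) = ⊤

/-- Two distinct vertices are neighboring if n−1 linearly independent constraints are
tight at both. -/
def Neighboring {m n : ℕ} (a : Fin m → EuclideanSpace ℝ (Fin n)) (b : Fin m → ℝ)
    (z₁ z₂ : EuclideanSpace ℝ (Fin n)) : Prop :=
  IsVertex a b z₁ ∧ IsVertex a b z₂ ∧ z₁ ≠ z₂ ∧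
    ∃ s : Finset (Fin m), s.card = n - 1 ∧
      LinearIndependent ℝ (fun i : s => a i) ∧
      ∀ i ∈ s, ⟪a i, z₁⟫ = b i ∧ ⟪a i, z₂⟫ = b i

/-- The largest absolute value of a sub-determinant of size k. -/
def subdetSup {m n : ℕ} (A : Matrix (Fin m) (Fin n) ℝ) (k : ℕ) : ℝ :=
  ⨆ (f : Fin k → Fin m) (_ : Function.Injective f) (g : Fin k → Fin n)
    (_ : Function.Injective g), |(A.submatrix f g).det|

end

/-!
The rows `w i` of the inverse matrix form the basis dual to the `N(a j)`, so
`⟪w i, a j⟫ = ‖a j‖` if `i = j` and `0` otherwise. Thus `w i` lies in the orthogonal complement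
of the span of the other `a j`, which is a line. On a line Cauchy–Schwarz is an equality, so
projecting `a i` onto it gives `‖w i‖ * δ̂ = 1`, i.e. `‖w i‖ ≤ 1 / δ`. Every entry of a column of
the inverse is therefore at most `1 / δ` in absolute value, and a column has `n` entries.
-/

section OrthogonalProjection

variable {E : Type*} [NormedAddCommGroup E] [InnerProductSpace ℝ E]

theorem Submodule.norm_mul_norm_starProjection_eq_abs_inner {K : Submodule ℝ E}
    [K.HasOrthogonalProjection] (hK : Module.finrank ℝ K = 1) {w : E} (hw : w ∈ K) (v : E) :
    ‖w‖ * ‖K.starProjection v‖ = |⟪w, v⟫| := by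
  rw [← K.starProjection_eq_self_iff.mpr hw, K.inner_starProjection_left_eq_right,
    K.starProjection_eq_self_iff.mpr hw]
  have hp : K.starProjection v ∈ K := K.starProjection_apply_mem v
  generalize K.starProjection v = p at hp ⊢
  rcases eq_or_ne p 0 with rfl | hp0
  · simp
  obtain ⟨c, hc⟩ := (finrank_eq_one_iff_of_nonzero' (⟨p, hp⟩ : K) (by simpa using hp0)).mp hK
    ⟨w, hw⟩
  obtain rfl : c • p = w := congrArg Subtype.val hc
  rw [norm_smul, real_inner_smul_left, real_inner_self_eq_norm_sq, abs_mul,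
    abs_of_nonneg (sq_nonneg ‖p‖), Real.norm_eq_abs]
  ring

theorem LinearIndependent.finrank_orthogonal_span_image_ne [FiniteDimensional ℝ E]
    {ι : Type*} [Fintype ι] {a : ι → E} (ha : LinearIndependent ℝ a)
    (hE : Module.finrank ℝ E = Fintype.card ι) (i : ι) :
    Module.finrank ℝ (Submodule.span ℝ (a '' {j | j ≠ i}))ᗮ = 1 := by
  classical
  have hspan : Module.finrank ℝ (Submodule.span ℝ (a '' {j | j ≠ i})) = Fintype.card ι - 1 := by
    rw [Set.image_eq_range]
    refine (finrank_span_eq_card (ha.comp _ Subtype.val_injective)).trans ?_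
    simp [Fintype.card_subtype_compl]
  have hsum := (Submodule.span ℝ (a '' {j | j ≠ i})).finrank_add_finrank_orthogonal
  have hι : 0 < Fintype.card ι := Fintype.card_pos_iff.mpr ⟨i⟩
  omega

end OrthogonalProjection

theorem EuclideanSpace.norm_le_sqrt_card_mul {ι : Type*} [Fintype ι]
    {x : EuclideanSpace ℝ ι} {C : ℝ} (hx : ∀ i, ‖x i‖ ≤ C) :
    ‖x‖ ≤ √(Fintype.card ι) * C := by
  rcases isEmpty_or_nonempty ι with hι | ⟨⟨i⟩⟩
  · simp [EuclideanSpace.norm_eq]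
  have hC : 0 ≤ C := (norm_nonneg _).trans (hx i)
  calc ‖x‖ = √(∑ i, ‖x i‖ ^ 2) := EuclideanSpace.norm_eq x
    _ ≤ √(∑ _i : ι, C ^ 2) := by gcongr with i; exact hx i
    _ = √(Fintype.card ι) * C := by
      rw [Finset.sum_const, Finset.card_univ, nsmul_eq_mul, Real.sqrt_mul (Nat.cast_nonneg _),
        Real.sqrt_sq hC]

section Delta

variable {n : ℕ}

theorem deltaHat_nonneg (S : Set (EuclideanSpace ℝ (Fin n))) (v : EuclideanSpace ℝ (Fin n)) :
    0 ≤ deltaHat S v :=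
  div_nonneg (norm_nonneg _) (norm_nonneg _)

theorem norm_mul_deltaHat_eq {S : Set (EuclideanSpace ℝ (Fin n))}
    (hS : Module.finrank ℝ (Submodule.span ℝ S)ᗮ = 1) {w : EuclideanSpace ℝ (Fin n)}
    (hw : w ∈ (Submodule.span ℝ S)ᗮ) (v : EuclideanSpace ℝ (Fin n)) :
    ‖w‖ * deltaHat S v = |⟪w, v⟫| / ‖v‖ := by
  rw [deltaHat, Submodule.coe_orthogonalProjectionOnto_apply, mul_div_assoc',
    Submodule.norm_mul_norm_starProjection_eq_abs_inner hS hw]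

theorem deltaVec_le (z : Fin n → EuclideanSpace ℝ (Fin n)) (k : Fin n) :
    deltaVec z ≤ deltaHat (z '' {i | i ≠ k}) (z k) :=
  ciInf_le ⟨0, by rintro _ ⟨i, rfl⟩; exact deltaHat_nonneg _ _⟩ k

theorem deltaVec_pos [Nonempty (Fin n)] {z : Fin n → EuclideanSpace ℝ (Fin n)}
    (hz : ∀ k, deltaHat (z '' {i | i ≠ k}) (z k) ≠ 0) : 0 < deltaVec z := by
  obtain ⟨k, hk⟩ := exists_eq_ciInf_of_finite (f := fun k => deltaHat (z '' {i | i ≠ k}) (z k))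
  rw [deltaVec, ← hk]
  exact (deltaHat_nonneg _ _).lt_of_ne' (hz k)

theorem linearIndependent_nrm {ι : Type*} {a : ι → EuclideanSpace ℝ (Fin n)}
    (ha : LinearIndependent ℝ a) : LinearIndependent ℝ (fun j => nrm (a j)) :=
  ha.units_smul fun j => Units.mk0 ‖a j‖⁻¹ (inv_ne_zero (norm_ne_zero_iff.mpr (ha.ne_zero j)))

theorem inner_toE_row_inv_of_cols {b : Fin n → EuclideanSpace ℝ (Fin n)}
    (hb : LinearIndependent ℝ b) (i j : Fin n) :
    ⟪toE ((Matrix.of fun i j => ofE (b j) i)⁻¹ i), b j⟫ = if i = j then 1 else 0 := by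
  set B : Matrix (Fin n) (Fin n) ℝ := Matrix.of fun i j => ofE (b j) i
  have hcols : LinearIndependent ℝ B.col :=
    hb.map' (WithLp.linearEquiv 2 ℝ (Fin n → ℝ)).toLinearMap (LinearEquiv.ker _)
  have hB : B⁻¹ * B = 1 :=
    B.nonsing_inv_mul <| B.isUnit_iff_isUnit_det.mp <|
      Matrix.linearIndependent_cols_iff_isUnit.mp hcols
  rw [← Matrix.one_apply, ← hB, Matrix.mul_apply, real_inner_comm, PiLp.inner_apply]
  simp [toE, B, ofE]

end Delta

/-- For linearly independent a₁, …, aₙ ∈ ℝⁿ, every column r of the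
inverse of the matrix [N(a₁), …, N(aₙ)] (columns N(aᵢ)) satisfies
‖r‖ ≤ √n / δ(a₁, …, aₙ). -/
theorem stmt11 {n : ℕ} (a : Fin n → EuclideanSpace ℝ (Fin n))
    (hli : LinearIndependent ℝ a) (k : Fin n) :
    ‖toE (fun i => (Matrix.of fun i j => ofE (nrm (a j)) i)⁻¹ i k)‖ ≤
      Real.sqrt n / deltaVec a := by
  have : Nonempty (Fin n) := ⟨k⟩
  set w : Fin n → EuclideanSpace ℝ (Fin n) :=
    fun i => toE ((Matrix.of fun i j => ofE (nrm (a j)) i)⁻¹ i)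
  have hdual : ∀ i j, ⟪w i, a j⟫ = if i = j then ‖a j‖ else 0 := fun i j => by
    have ha : ‖a j‖ • nrm (a j) = a j := smul_inv_smul₀ (norm_ne_zero_iff.mpr (hli.ne_zero j)) _
    conv_lhs => rw [← ha]
    rw [real_inner_smul_right, inner_toE_row_inv_of_cols (linearIndependent_nrm hli)]
    split_ifs <;> simp
  have hmem : ∀ i, w i ∈ (Submodule.span ℝ (a '' {j | j ≠ i}))ᗮ := by
    intro i
    refine (Submodule.isOrtho_span.mpr ?_).le (Submodule.mem_span_singleton_self (w i))
    rintro _ rfl _ ⟨j, hj, rfl⟩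
    rw [hdual, if_neg (Ne.symm hj)]
  have hrow : ∀ i, ‖w i‖ * deltaHat (a '' {j | j ≠ i}) (a i) = 1 := fun i => by
    rw [norm_mul_deltaHat_eq (hli.finrank_orthogonal_span_image_ne (by simp) i) (hmem i), hdual,
      if_pos rfl, abs_norm, div_self (norm_ne_zero_iff.mpr (hli.ne_zero i))]
  have hδ : 0 < deltaVec a := deltaVec_pos fun i => right_ne_zero_of_mul_eq_one (hrow i)
  have hentry : ∀ i, ‖w i k‖ ≤ (deltaVec a)⁻¹ := fun i =>
    calc ‖w i k‖ ≤ ‖w i‖ := PiLp.norm_apply_le _ _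
      _ = (deltaHat (a '' {j | j ≠ i}) (a i))⁻¹ := eq_inv_of_mul_eq_one_left (hrow i)
      _ ≤ (deltaVec a)⁻¹ := inv_anti₀ hδ (deltaVec_le a i)
  calc _ ≤ √(Fintype.card (Fin n)) * (deltaVec a)⁻¹ :=
        EuclideanSpace.norm_le_sqrt_card_mul hentry
    _ = Real.sqrt n / deltaVec a := by rw [Fintype.card_fin, div_eq_mul_inv]
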